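/- arXiv:1812.07072 — 2 statements merged into one kernel-verified Lean document; each statement's English description precedes it below -/
import Mathlib

section
/- For every finite set W ⊆ ℤ and every n ≥ 1, let D be the set of all sums of at most n − 1 elements of W (with repetition allowed, and including the empty sum 0). Then the W-linear graph on D is (n,W)-universal; in particular there exists an (n,W)-universal graph whose size is the number of such sums. -/
/-!
Mean payoff forbids negative cycles: repeating a cycle of weight `S < 0` and length `L` forever
gives a path whose prefix means equal `S / L` at every multiple of `L`. Without negative cycles,
cutting out cycles shortens any path from the initial vertex to fewer than `|V| ≤ n` edges
without increasing its weight, so `φ v`, the least weight of such a short path to `v`, is a sum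
of at most `n - 1` weights and satisfies `φ v' ≤ φ v + w` along every edge `(v, w, v')`: it is a
homomorphism into the linear graph. Conversely, along a path of the linear graph on a finite set
the prefix sums dominate the difference of two vertices, so they are bounded below and the prefix
means have nonnegative liminf.
-/

open Filter


/-- A finite path: a list of consecutive edges, all belonging to `E`,
starting at `u` (when nonempty). -/
def FinPath {V : Type} (E : Set (V × ℤ × V)) (u : V) (p : List (V × ℤ × V)) : Prop :=
  (∀ e ∈ p, e ∈ E) ∧ List.Chain' (fun e e' => e.2.2 = e'.1) p ∧
    ∀ h : p ≠ [], (p.head h).1 = u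

/-- The last vertex of a finite path starting at `u` (which is `u` itself for the empty path). -/
def lastV {V : Type} (u : V) (p : List (V × ℤ × V)) : V :=
  (p.getLastD (u, 0, u)).2.2

/-- An infinite path: a sequence of consecutive edges, all belonging to `E`. -/
def InfPath {V : Type} (E : Set (V × ℤ × V)) (π : ℕ → V × ℤ × V) : Prop :=
  (∀ i, π i ∈ E) ∧ ∀ i, (π i).2.2 = (π (i + 1)).1

/-- The total weight of a finite path. -/
def pathWeight {V : Type} (p : List (V × ℤ × V)) : ℤ :=
  (p.map fun e => e.2.1).sum

/-- A sequence of integer weights satisfies mean payoff if the liminf of the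
averages of its prefixes is nonnegative. -/
def MeanPayoffSeq (w : ℕ → ℤ) : Prop :=
  0 ≤ Filter.atTop.liminf (fun ℓ : ℕ => (∑ i ∈ Finset.range ℓ, (w i : ℝ)) / (ℓ : ℝ))

/-- A graph (given by its edge set) satisfies mean payoff if all its infinite paths do. -/
def SatMP {V : Type} (E : Set (V × ℤ × V)) : Prop :=
  ∀ π : ℕ → V × ℤ × V, InfPath E π → MeanPayoffSeq (fun i => (π i).2.1)

/-- A cycle: a nonempty finite path whose first and last vertices coincide. -/
def IsCycle {V : Type} (E : Set (V × ℤ × V)) (p : List (V × ℤ × V)) : Prop :=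
  p ≠ [] ∧ ∃ v, FinPath E v p ∧ lastV v p = v

/-- A `W`-graph: a finite set of vertices, edges labelled by weights in `W`,
and an initial vertex from which every vertex is reachable. -/
structure WGraph (W : Finset ℤ) where
  V : Type
  fin : Fintype V
  E : Set (V × ℤ × V)
  init : V
  wt : ∀ e ∈ E, e.2.1 ∈ W
  reach : ∀ v : V, ∃ p, FinPath E init p ∧ lastV init p = v

attribute [instance] WGraph.fin

/-- The `W`-linear graph on a set `A ⊆ ℤ`: vertices are the elements of `A`, and
for `v, v' ∈ A` and `w ∈ W` there is an edge `(v, w, v')` whenever `v' - v ≤ w`. -/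
def LinE (W : Finset ℤ) (A : Set ℤ) : Set (ℤ × ℤ × ℤ) :=
  {e | e.1 ∈ A ∧ e.2.2 ∈ A ∧ e.2.1 ∈ W ∧ e.2.2 - e.1 ≤ e.2.1}

/-- A homomorphism of labelled graphs (no requirement on initial vertices). -/
def IsHom {V U : Type} (E : Set (V × ℤ × V)) (E' : Set (U × ℤ × U)) (φ : V → U) : Prop :=
  ∀ e ∈ E, (φ e.1, e.2.1, φ e.2.2) ∈ E'

/-- A graph (given by its edge set) is `(n,W)`-universal if it satisfies mean payoff and
every `(n,W)`-graph satisfying mean payoff admits a homomorphism into it. -/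
def Universal (n : ℕ) (W : Finset ℤ) {U : Type} (EU : Set (U × ℤ × U)) : Prop :=
  SatMP EU ∧
    ∀ G : WGraph W, Fintype.card G.V ≤ n → SatMP G.E → ∃ φ : G.V → U, IsHom G.E EU φ

/-- The set of weights `(-N, N)`: integers `w` with `-N < w < N`. -/
noncomputable def Wball (N : ℕ) : Finset ℤ := Finset.Ioo (-(N : ℤ)) (N : ℤ)

/-- `φ` is the distance function from the initial vertex: `φ v` is the minimum total
weight of a finite path from the initial vertex to `v`. -/
def IsDistFrom {W : Finset ℤ} (G : WGraph W) (φ : G.V → ℤ) : Prop :=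
  ∀ v : G.V,
    (∃ p, FinPath G.E G.init p ∧ lastV G.init p = v ∧ pathWeight p = φ v) ∧
    ∀ p, FinPath G.E G.init p → lastV G.init p = v → φ v ≤ pathWeight p

/-- The set of all sums of at most `n - 1` elements of `W` (with repetitions allowed,
including the empty sum `0`). -/
def sumsUpTo (W : Finset ℤ) (n : ℕ) : Set ℤ :=
  {z | ∃ l : List ℤ, (∀ x ∈ l, x ∈ W) ∧ l.length ≤ n - 1 ∧ l.sum = z}


open Finset Function Topology

section MeanPayoff

noncomputable def prefixMean (w : ℕ → ℤ) (ℓ : ℕ) : ℝ := (∑ i ∈ range ℓ, (w i : ℝ)) / ℓ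

variable {w : ℕ → ℤ}

lemma meanPayoffSeq_iff : MeanPayoffSeq w ↔ 0 ≤ atTop.liminf (prefixMean w) := Iff.rfl

lemma prefixMean_le {B : ℤ} (hB : ∀ i, w i ≤ B) {ℓ : ℕ} (hℓ : 0 < ℓ) : prefixMean w ℓ ≤ B := by
  rw [prefixMean, div_le_iff₀ (by exact_mod_cast hℓ)]
  simpa [mul_comm] using Finset.sum_le_card_nsmul (range ℓ) (fun i => (w i : ℝ)) B
    (fun i _ => by exact_mod_cast hB i)

lemma le_prefixMean {B : ℤ} (hB : ∀ i, B ≤ w i) {ℓ : ℕ} (hℓ : 0 < ℓ) : B ≤ prefixMean w ℓ := by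
  rw [prefixMean, le_div_iff₀ (by exact_mod_cast hℓ)]
  simpa [mul_comm] using Finset.card_nsmul_le_sum (range ℓ) (fun i => (w i : ℝ)) B
    (fun i _ => by exact_mod_cast hB i)

lemma meanPayoffSeq_of_sum_ge {B K : ℤ} (hB : ∀ i, w i ≤ B)
    (hK : ∀ ℓ, -K ≤ ∑ i ∈ range ℓ, w i) : MeanPayoffSeq w := by
  have hlow : Tendsto (fun ℓ : ℕ => (-K : ℝ) / ℓ) atTop (𝓝 0) :=
    tendsto_const_div_atTop_nhds_zero_nat _
  have hcobdd : IsCoboundedUnder (· ≥ ·) atTop (prefixMean w) :=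
    (isBoundedUnder_of_eventually_le ((eventually_gt_atTop 0).mono
      fun ℓ hℓ => prefixMean_le hB hℓ)).isCoboundedUnder_ge
  rw [meanPayoffSeq_iff, ← hlow.liminf_eq]
  refine liminf_le_liminf (Eventually.of_forall fun ℓ => ?_) hlow.isBoundedUnder_ge hcobdd
  exact div_le_div_of_nonneg_right (by exact_mod_cast hK ℓ) ℓ.cast_nonneg

lemma Function.Periodic.sum_range_mul {L : ℕ} (hw : Periodic w L) (k : ℕ) :
    ∑ i ∈ range (k * L), w i = k * ∑ i ∈ range L, w i := by
  induction k with
  | zero => simp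
  | succ k ih =>
    have hk : ∀ i, w (i + k * L) = w i := by simpa using hw.nat_mul k
    rw [Nat.succ_mul, sum_range_add, ih]
    simp only [add_comm (k * L), hk]
    push_cast
    ring

lemma MeanPayoffSeq.sum_range_nonneg_of_periodic (h : MeanPayoffSeq w) {L : ℕ}
    (hw : Periodic w L) : 0 ≤ ∑ i ∈ range L, w i := by
  rcases Nat.eq_zero_or_pos L with rfl | hL
  · simp
  set S := ∑ i ∈ range L, w i
  have hlower : ∀ i, -∑ j ∈ range L, |w j| ≤ w i := fun i => by
    rw [← hw.map_mod_nat i]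
    exact neg_le_of_abs_le (single_le_sum (fun j _ => abs_nonneg (w j))
      (mem_range.2 (Nat.mod_lt i hL)))
  have hbdd : IsBoundedUnder (· ≥ ·) atTop (prefixMean w) :=
    isBoundedUnder_of_eventually_ge ((eventually_gt_atTop 0).mono
      fun ℓ hℓ => le_prefixMean hlower hℓ)
  have hfreq : ∃ᶠ ℓ in atTop, prefixMean w ℓ ≤ (S : ℝ) / L := by
    refine frequently_atTop.2 fun N => ⟨(N + 1) * L, by nlinarith, ?_⟩
    rw [prefixMean, ← Int.cast_sum, hw.sum_range_mul]
    push_cast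
    rw [mul_div_mul_left _ _ (by positivity), Int.cast_sum]
  have hmean := (meanPayoffSeq_iff.1 h).trans (liminf_le_of_frequently_le hfreq hbdd)
  rw [le_div_iff₀ (by exact_mod_cast hL), zero_mul] at hmean
  exact_mod_cast hmean

end MeanPayoff

section Paths

variable {V : Type} {E : Set (V × ℤ × V)} {u : V} {p : List (V × ℤ × V)}

lemma lastV_append (u : V) (a b : List (V × ℤ × V)) :
    lastV u (a ++ b) = lastV (lastV u a) b := by
  rcases List.eq_nil_or_concat b with rfl | ⟨c, e, rfl⟩
  · simp [lastV]
  · simp only [List.concat_eq_append, lastV, ← List.append_assoc, List.getLastD_concat]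

lemma pathWeight_append (a b : List (V × ℤ × V)) :
    pathWeight (a ++ b) = pathWeight a + pathWeight b := by
  simp [pathWeight]

lemma pathWeight_singleton (e : V × ℤ × V) : pathWeight [e] = e.2.1 := by
  simp [pathWeight]

lemma finPath_iff_head? :
    FinPath E u p ↔ (∀ e ∈ p, e ∈ E) ∧ p.IsChain (fun e e' => e.2.2 = e'.1) ∧
      ∀ e ∈ p.head?, u = e.1 := by
  cases p <;> simp [FinPath, List.Chain', eq_comm]

lemma finPath_append {a b : List (V × ℤ × V)} :
    FinPath E u (a ++ b) ↔ FinPath E u a ∧ FinPath E (lastV u a) b := by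
  rcases eq_or_ne a [] with rfl | ha
  · simp [lastV, finPath_iff_head?]
  have hlast : a.getLast? = some (a.getLast ha) := List.getLast?_eq_some_getLast ha
  have hlastV : lastV u a = (a.getLast ha).2.2 := by
    rw [lastV, List.getLastD_eq_getLast?, hlast]
    rfl
  simp only [finPath_iff_head?, List.isChain_append, List.mem_append, hlast,
    List.head?_append_of_ne_nil _ ha, hlastV, Option.mem_def, Option.some.injEq,
    forall_eq', or_imp, forall_and]
  tauto

lemma finPath_singleton {e : V × ℤ × V} : FinPath E u [e] ↔ e ∈ E ∧ e.1 = u := by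
  simp [FinPath, List.Chain', eq_comm]

end Paths

def NoNegCycle {V : Type} (E : Set (V × ℤ × V)) : Prop :=
  ∀ p, IsCycle E p → 0 ≤ pathWeight p

section Shortening

variable {V : Type} [Fintype V]

lemma exists_eq_append_lastV_eq (u : V) (p : List (V × ℤ × V)) (h : Fintype.card V ≤ p.length) :
    ∃ a m b, p = a ++ m ++ b ∧ m ≠ [] ∧ lastV u (a ++ m) = lastV u a := by
  obtain ⟨x, y, hxy, hfxy⟩ := Fintype.exists_ne_map_eq_of_card_lt
    (fun k : Fin (p.length + 1) => lastV u (p.take k)) (by simpa using Nat.lt_succ_of_le h)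
  wlog hlt : x < y generalizing x y
  · exact this y x hxy.symm hfxy.symm (lt_of_le_of_ne (not_lt.1 hlt) hxy.symm)
  have hy := y.isLt
  have htake : p.take x ++ (p.drop x).take (y - x) = p.take y := by
    rw [← List.take_add, Nat.add_sub_cancel' hlt.le]
  refine ⟨p.take x, (p.drop x).take (y - x), p.drop y, ?_, ?_, ?_⟩
  · rw [htake, List.take_append_drop]
  · rw [← List.length_pos_iff, List.length_take, List.length_drop]
    omega
  · rw [htake]
    exact hfxy.symm

variable {E : Set (V × ℤ × V)} {u : V} {p : List (V × ℤ × V)}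

lemma FinPath.exists_shorter (hcyc : NoNegCycle E) (hp : FinPath E u p)
    (h : Fintype.card V ≤ p.length) :
    ∃ q, FinPath E u q ∧ lastV u q = lastV u p ∧ q.length < p.length ∧
      pathWeight q ≤ pathWeight p := by
  obtain ⟨a, m, b, rfl, hm, hloop⟩ := exists_eq_append_lastV_eq u p h
  obtain ⟨⟨ha, hmpath⟩, hb⟩ := by simpa only [finPath_append] using hp
  have hcycle : IsCycle E m := ⟨hm, lastV u a, hmpath, by rwa [← lastV_append]⟩
  refine ⟨a ++ b, finPath_append.2 ⟨ha, by rwa [hloop] at hb⟩, ?_, ?_, ?_⟩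
  · rw [lastV_append, lastV_append, hloop]
  · simpa using List.length_pos_iff.2 hm
  · simp only [pathWeight_append]
    linarith [hcyc m hcycle]

lemma FinPath.exists_short (hcyc : NoNegCycle E) (hp : FinPath E u p) :
    ∃ q, FinPath E u q ∧ lastV u q = lastV u p ∧ q.length < Fintype.card V ∧
      pathWeight q ≤ pathWeight p := by
  induction hlen : p.length using Nat.strong_induction_on generalizing p with
  | _ n ih =>
    rcases lt_or_ge p.length (Fintype.card V) with h | h
    · exact ⟨p, hp, rfl, h, le_rfl⟩
    obtain ⟨q, hq, hql, hqlen, hqw⟩ := hp.exists_shorter hcyc h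
    obtain ⟨r, hr, hrl, hrlen, hrw⟩ := ih q.length (hlen ▸ hqlen) hq rfl
    exact ⟨r, hr, hrl.trans hql, hrlen, hrw.trans hqw⟩

end Shortening

section Cycles

variable {V : Type} {E : Set (V × ℤ × V)}

lemma IsCycle.snd_snd_eq_fst_succ_mod {p : List (V × ℤ × V)} (hc : IsCycle E p) (i : ℕ)
    (hi : i < p.length) : p[i].2.2 = (p[(i + 1) % p.length]'(Nat.mod_lt _ (by omega))).1 := by
  obtain ⟨hne, v, hp, hlast⟩ := hc
  obtain hlt | heq : i + 1 < p.length ∨ i + 1 = p.length := by omega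
  · simp only [Nat.mod_eq_of_lt hlt]
    exact List.isChain_iff_getElem.1 hp.2.1 i hlt
  · simp only [heq, Nat.mod_self]
    have hfirst : p[0].1 = v := by simpa [List.head_eq_getElem] using hp.2.2 hne
    have hend : p[i].2.2 = v := by
      rw [← hlast, lastV, List.getLastD_eq_getLast?, List.getLast?_eq_some_getLast hne]
      simp [List.getLast_eq_getElem, ← heq]
    rw [hfirst, hend]

lemma IsCycle.exists_infPath {p : List (V × ℤ × V)} (hc : IsCycle E p) :
    ∃ π, InfPath E π ∧ Periodic (fun i => (π i).2.1) p.length ∧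
      ∑ i ∈ range p.length, (π i).2.1 = pathWeight p := by
  have hL : 0 < p.length := List.length_pos_iff.2 hc.1
  obtain ⟨-, v, hp, -⟩ := id hc
  refine ⟨fun i => p[i % p.length]'(Nat.mod_lt _ hL), ⟨fun i => hp.1 _ (List.getElem_mem _),
    fun i => ?_⟩, fun i => by simp, ?_⟩
  · simpa [Nat.add_mod] using hc.snd_snd_eq_fst_succ_mod _ (Nat.mod_lt i hL)
  · rw [pathWeight, sum_range, ← Fin.sum_univ_getElem]
    simp only [List.getElem_map]
    exact Fintype.sum_equiv (finCongr (by simp)) _ _ fun x => by simp [Nat.mod_eq_of_lt x.isLt]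

end Cycles

lemma SatMP.noNegCycle {V : Type} {E : Set (V × ℤ × V)} (h : SatMP E) : NoNegCycle E :=
  fun p hp => by
    obtain ⟨π, hπ, hper, hsum⟩ := hp.exists_infPath
    exact hsum ▸ (h π hπ).sum_range_nonneg_of_periodic hper

section LinearGraph

variable {W : Finset ℤ} {A : Set ℤ}

lemma linE_mono (W : Finset ℤ) : Monotone (LinE W) :=
  fun _ _ hAB _ ⟨h₁, h₂, hw⟩ => ⟨hAB h₁, hAB h₂, hw⟩

lemma InfPath.sub_le_sum_of_linE {π : ℕ → ℤ × ℤ × ℤ} (hπ : InfPath (LinE W A) π) (ℓ : ℕ) :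
    (π ℓ).1 - (π 0).1 ≤ ∑ i ∈ range ℓ, (π i).2.1 := by
  induction ℓ with
  | zero => simp
  | succ ℓ ih =>
    rw [sum_range_succ, ← hπ.2 ℓ]
    linarith [(hπ.1 ℓ).2.2.2]

lemma satMP_linE (hA : A.Finite) : SatMP (LinE W A) := by
  intro π hπ
  obtain ⟨B, hB⟩ := W.bddAbove
  obtain ⟨lo, hlo⟩ := hA.bddBelow
  obtain ⟨hi, hhi⟩ := hA.bddAbove
  refine meanPayoffSeq_of_sum_ge (B := B) (K := hi - lo) (fun i => hB (hπ.1 i).2.2.1) fun ℓ => ?_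
  linarith [hπ.sub_le_sum_of_linE ℓ, hlo (hπ.1 ℓ).1, hhi (hπ.1 0).1]

end LinearGraph

section SumsUpTo

lemma sumsUpTo_finite (W : Finset ℤ) (n : ℕ) : (sumsUpTo W n).Finite := by
  refine ((List.finite_length_le W (n - 1)).image fun l => (l.map (↑)).sum).subset ?_
  rintro _ ⟨l, hW, hlen, rfl⟩
  lift l to List W using hW
  exact ⟨l, by simpa using hlen, rfl⟩

lemma sumsUpTo_mono (W : Finset ℤ) : Monotone (sumsUpTo W) :=
  fun _ _ hmn _ ⟨l, hW, hlen, hsum⟩ => ⟨l, hW, hlen.trans (by omega), hsum⟩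

lemma pathWeight_mem_sumsUpTo {V : Type} {W : Finset ℤ} {p : List (V × ℤ × V)}
    (hW : ∀ e ∈ p, e.2.1 ∈ W) : pathWeight p ∈ sumsUpTo W (p.length + 1) :=
  ⟨p.map fun e => e.2.1, List.forall_mem_map.2 hW, by simp, rfl⟩

end SumsUpTo

theorem WGraph.exists_isHom_linE {W : Finset ℤ} (G : WGraph W) (hG : NoNegCycle G.E) :
    ∃ φ : G.V → ℤ, IsHom G.E (LinE W (sumsUpTo W (Fintype.card G.V))) φ := by
  set shortWeights : G.V → Set ℤ := fun v => {z | ∃ p, FinPath G.E G.init p ∧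
    lastV G.init p = v ∧ p.length < Fintype.card G.V ∧ pathWeight p = z}
  have hsub : ∀ v, shortWeights v ⊆ sumsUpTo W (Fintype.card G.V) := by
    rintro v _ ⟨p, hp, -, hlen, rfl⟩
    exact sumsUpTo_mono W hlen (pathWeight_mem_sumsUpTo fun e he => G.wt e (hp.1 e he))
  have hne : ∀ v, (shortWeights v).Nonempty := fun v => by
    obtain ⟨p, hp, rfl⟩ := G.reach v
    obtain ⟨q, hq, hqv, hlen, -⟩ := hp.exists_short hG
    exact ⟨_, q, hq, hqv, hlen, rfl⟩
  choose φ hφ hmin using fun v =>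
    Set.exists_min_image (shortWeights v) id ((sumsUpTo_finite _ _).subset (hsub v)) (hne v)
  refine ⟨φ, fun e he => ⟨hsub _ (hφ _), hsub _ (hφ _), G.wt e he, ?_⟩⟩
  obtain ⟨p, hp, hpv, -, hpφ⟩ := hφ e.1
  have hpe : FinPath G.E G.init (p ++ [e]) :=
    finPath_append.2 ⟨hp, finPath_singleton.2 ⟨he, hpv.symm⟩⟩
  obtain ⟨q, hq, hqv, hlen, hqw⟩ := hpe.exists_short hG
  have hφq : φ e.2.2 ≤ pathWeight q :=
    hmin _ _ ⟨q, hq, by rw [hqv, lastV_append, hpv]; rfl, hlen, rfl⟩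
  rw [pathWeight_append, pathWeight_singleton, hpφ] at hqw
  show φ e.2.2 - φ e.1 ≤ e.2.1
  linarith

theorem sums_linear_universal_general (W : Finset ℤ) (n : ℕ) :
    (sumsUpTo W n).Finite ∧ Universal n W (LinE W (sumsUpTo W n)) := by
  refine ⟨sumsUpTo_finite W n, satMP_linE (sumsUpTo_finite W n), fun G hcard hG => ?_⟩
  obtain ⟨φ, hφ⟩ := G.exists_isHom_linE hG.noNegCycle
  exact ⟨φ, fun e he => linE_mono W (sumsUpTo_mono W hcard) (hφ e he)⟩

/-- the `W`-linear graph on the set of sums of at most `n - 1`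
elements of `W` is `(n,W)`-universal (and this set is finite, so this gives an
`(n,W)`-universal graph whose size is the number of such sums). -/
theorem sums_linear_universal (W : Finset ℤ) (n : ℕ) (hn : 1 ≤ n) :
    (sumsUpTo W n).Finite ∧ Universal n W (LinE W (sumsUpTo W n)) :=
  sums_linear_universal_general W n
end

section
/- Let k ≥ 2 and n ≥ 2 be integers such that k − 1 divides n − 1. Let T = 1 + n + n² + ⋯ + n^{k−2} and let W = {1, n, n², …, n^{k−2}} ∪ {−((n−1)/(k−1))·T}, a set of k integers. Then every (n,W)-universal graph U satisfies, as real numbers, |U| ≥ ((n−1)/(k−1)²)^{(k−1)²/k}; equivalently |U|^k ≥ ((n−1)/(k−1)²)^{(k−1)²}. -/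
open Filter


/-!
Put `K = k - 1` and `q = (n - 1) / K`, so that `n = qK + 1`. A `K × K` matrix `a` with entries at
most `q / K` is encoded as a cycle of length `n` made of `K + 1` runs of edges: run `i < K` carries
`a i j` edges of weight `n ^ j` for each `j`, and run `K` is one edge of weight
`-q (1 + n + ⋯ + n ^ (K - 1))` followed by `q - ∑ i, a i j` edges of weight `n ^ j`. The cycle has
weight `0`, so it satisfies mean payoff and maps into `U`; record the images of the run boundaries.

If two matrices have the same record, then between consecutive recorded vertices `U` has walks of
both run weights `x i` and `y i`, and splicing the lighter ones gives a closed walk of weight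
`∑ i, min (x i) (y i)`. Since `∑ x = ∑ y = 0` and `U` has no negative closed walk, `x = y`; the
weights of the first `K` runs are the base-`n` expansions of the rows, so the matrices agree. Thus
`(q / K + 1) ^ (K * K) ≤ |U| ^ k`, and `q / K + 1 ≥ (n - 1) / (k - 1) ^ 2`.
-/

open Finset

theorem le_prefix_average {w : ℕ → ℤ} {B : ℤ} (hB : ∀ i, B ≤ w i) {ℓ : ℕ} (hℓ : 0 < ℓ) :
    (B : ℝ) ≤ (∑ i ∈ range ℓ, (w i : ℝ)) / ℓ := by
  rw [le_div_iff₀ (by positivity)]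
  simpa [mul_comm] using card_nsmul_le_sum (range ℓ) (fun i => (w i : ℝ)) B
    (fun i _ => by exact_mod_cast hB i)

theorem prefix_average_le {w : ℕ → ℤ} {M : ℤ} (hM : ∀ i, w i ≤ M) {ℓ : ℕ} (hℓ : 0 < ℓ) :
    (∑ i ∈ range ℓ, (w i : ℝ)) / ℓ ≤ M := by
  rw [div_le_iff₀ (by positivity)]
  simpa [mul_comm] using sum_le_card_nsmul (range ℓ) (fun i => (w i : ℝ)) M
    (fun i _ => by exact_mod_cast hM i)

theorem meanPayoffSeq_of_prefix_sum_ge {w : ℕ → ℤ} {M C : ℤ} (hM : ∀ i, w i ≤ M)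
    (hC : ∀ ℓ, -C ≤ ∑ i ∈ range ℓ, w i) : MeanPayoffSeq w := by
  have hlim := tendsto_const_div_atTop_nhds_zero_nat (-C : ℝ)
  have hlow : ∀ ℓ : ℕ, (-C : ℝ) / ℓ ≤ (∑ i ∈ range ℓ, (w i : ℝ)) / ℓ := fun ℓ =>
    div_le_div_of_nonneg_right (by exact_mod_cast hC ℓ) ℓ.cast_nonneg
  have hbdd : IsCoboundedUnder (· ≥ ·) atTop fun ℓ : ℕ => (∑ i ∈ range ℓ, (w i : ℝ)) / ℓ :=
    (isBoundedUnder_of_eventually_le ((eventually_gt_atTop 0).mono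
      fun _ hℓ => prefix_average_le hM hℓ)).isCoboundedUnder_ge
  calc (0 : ℝ) = liminf (fun ℓ : ℕ => (-C : ℝ) / ℓ) atTop := hlim.liminf_eq.symm
    _ ≤ _ := liminf_le_liminf (Eventually.of_forall hlow) hlim.isBoundedUnder_ge hbdd

theorem sum_range_mul_mod (w : ℕ → ℤ) (L m : ℕ) :
    ∑ t ∈ range (m * L), w (t % L) = m * ∑ t ∈ range L, w t := by
  induction m with
  | zero => simp
  | succ m ih =>
    have hmod : ∀ t ∈ range L, w ((m * L + t) % L) = w t := fun t ht => by
      rw [Nat.mul_add_mod_self_right, Nat.mod_eq_of_lt (mem_range.1 ht)]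
    rw [add_mul, one_mul, sum_range_add, ih, sum_congr rfl hmod]
    push_cast
    ring

theorem not_meanPayoffSeq_mod_of_sum_neg {w : ℕ → ℤ} {L : ℕ} (hL : 0 < L)
    (hneg : ∑ t ∈ range L, w t < 0) : ¬ MeanPayoffSeq fun t => w (t % L) := by
  set c := ∑ t ∈ range L, w t
  obtain ⟨B, hB⟩ := ((range L).image w).bddBelow
  have hBw : ∀ t, B ≤ w (t % L) := fun t =>
    hB (mem_image_of_mem w (mem_range.2 (Nat.mod_lt t hL)))
  have hfreq : ∃ᶠ ℓ : ℕ in atTop, (∑ i ∈ range ℓ, (w (i % L) : ℝ)) / ℓ ≤ (c : ℝ) / L := by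
    refine frequently_atTop.2 fun N => ⟨(N + 1) * L, by nlinarith, ?_⟩
    have hsum : ∑ i ∈ range ((N + 1) * L), (w (i % L) : ℝ) = ((N + 1 : ℕ) : ℝ) * c := by
      exact_mod_cast sum_range_mul_mod w L (N + 1)
    rw [hsum]
    push_cast
    rw [mul_div_mul_left _ _ (by positivity)]
  have hbdd : IsBoundedUnder (· ≥ ·) atTop fun ℓ : ℕ => (∑ i ∈ range ℓ, (w (i % L) : ℝ)) / ℓ :=
    isBoundedUnder_of_eventually_ge <|
      (eventually_gt_atTop 0).mono fun _ hℓ => le_prefix_average hBw hℓ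
  have hc : (c : ℝ) / L < 0 := div_neg_of_neg_of_pos (by exact_mod_cast hneg) (by positivity)
  exact fun h => hc.not_ge (h.trans (liminf_le_of_frequently_le hfreq hbdd))

inductive HasWalk {V : Type} (E : Set (V × ℤ × V)) : V → ℤ → V → Prop
  | refl (v : V) : HasWalk E v 0 v
  | cons {x y z : V} {w c : ℤ} : (x, w, y) ∈ E → HasWalk E y c z → HasWalk E x (w + c) z

namespace HasWalk

variable {V : Type} {E : Set (V × ℤ × V)}

theorem trans {x y z : V} {c d : ℤ} (h₁ : HasWalk E x c y) (h₂ : HasWalk E y d z) :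
    HasWalk E x (c + d) z := by
  induction h₁ with
  | refl => simpa using h₂
  | cons he _ ih => simpa [add_assoc] using cons he (ih h₂)

theorem map {U : Type} {E' : Set (U × ℤ × U)} {φ : V → U} (hφ : IsHom E E' φ) {x y : V} {c : ℤ}
    (h : HasWalk E x c y) : HasWalk E' (φ x) c (φ y) := by
  induction h with
  | refl v => exact refl (φ v)
  | cons he _ ih => exact cons (hφ _ he) ih

theorem sum_range {z : ℕ → V} {c : ℕ → ℤ} {m : ℕ}
    (h : ∀ i < m, HasWalk E (z i) (c i) (z (i + 1))) :
    HasWalk E (z 0) (∑ i ∈ range m, c i) (z m) := by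
  induction m with
  | zero => exact refl _
  | succ m ih =>
    rw [sum_range_succ]
    exact (ih fun i hi => h i (by omega)).trans (h m (by omega))

theorem exists_finPath {x y : V} {c : ℤ} (h : HasWalk E x c y) :
    ∃ p, FinPath E x p ∧ lastV x p = y := by
  induction h with
  | refl v => exact ⟨[], ⟨by simp, List.isChain_nil, by simp⟩, rfl⟩
  | @cons x y z w c he _ ih =>
    obtain ⟨p, ⟨hmem, hchain, hhead⟩, hlast⟩ := ih
    refine ⟨(x, w, y) :: p, ⟨List.forall_mem_cons.2 ⟨he, hmem⟩, ?_, fun _ => rfl⟩, ?_⟩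
    · rcases p with _ | ⟨e, p⟩
      · exact List.isChain_singleton _
      · exact List.isChain_cons_cons.2 ⟨(hhead (List.cons_ne_nil e p)).symm, hchain⟩
    · rcases p with _ | ⟨e, p⟩ <;>
        simpa only [lastV, List.getLastD_cons, List.getLastD_nil] using hlast

theorem exists_seq {x y : V} {c : ℤ} (h : HasWalk E x c y) :
    ∃ (L : ℕ) (v : ℕ → V) (w : ℕ → ℤ), v 0 = x ∧ v L = y ∧
      (∀ t < L, (v t, w t, v (t + 1)) ∈ E) ∧ ∑ t ∈ range L, w t = c := by
  induction h with
  | refl v => exact ⟨0, fun _ => v, fun _ => 0, rfl, rfl, by simp, by simp⟩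
  | @cons x y z w c he _ ih =>
    obtain ⟨L, v, w', hv0, hvL, hE, hsum⟩ := ih
    refine ⟨L + 1, fun | 0 => x | t + 1 => v t, fun | 0 => w | t + 1 => w' t, rfl, hvL, ?_, ?_⟩
    · rintro (_ | t) ht
      · simpa [hv0] using he
      · exact hE t (by omega)
    · rw [sum_range_succ', hsum, add_comm]

end HasWalk

theorem SatMP.hasWalk_nonneg {V : Type} {E : Set (V × ℤ × V)} (hE : SatMP E) {x : V} {c : ℤ}
    (h : HasWalk E x c x) : 0 ≤ c := by
  obtain ⟨L, v, w, hv0, hvL, hstep, rfl⟩ := h.exists_seq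
  by_contra! hneg
  have hL : 0 < L := Nat.pos_of_ne_zero (by rintro rfl; simp at hneg)
  have hnext : ∀ t, v (t % L + 1) = v ((t + 1) % L) := fun t => by
    rw [← Nat.mod_add_mod]
    rcases Nat.lt_or_ge (t % L + 1) L with hlt | hge
    · rw [Nat.mod_eq_of_lt hlt]
    · rw [show t % L + 1 = L by have := Nat.mod_lt t hL; omega, Nat.mod_self, hvL, hv0]
  exact not_meanPayoffSeq_mod_of_sum_neg hL hneg
    (hE (fun t => (v (t % L), w (t % L), v (t % L + 1)))
      ⟨fun t => hstep _ (Nat.mod_lt t hL), hnext⟩)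

theorem satMP_of_potential {V : Type} [Finite V] {E : Set (V × ℤ × V)} (ψ : V → ℤ)
    (hψ : ∀ e ∈ E, ψ e.2.2 - ψ e.1 ≤ e.2.1) (hE : BddAbove ((fun e => e.2.1) '' E)) :
    SatMP E := by
  intro π ⟨hmem, hchain⟩
  obtain ⟨M, hM⟩ := hE
  obtain ⟨A, hA⟩ := (Set.finite_range ψ).bddAbove
  obtain ⟨B, hB⟩ := (Set.finite_range ψ).bddBelow
  refine meanPayoffSeq_of_prefix_sum_ge (M := M) (C := A - B)
    (fun i => hM ⟨π i, hmem i, rfl⟩) fun ℓ => ?_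
  have htel : ψ (π ℓ).1 - ψ (π 0).1 ≤ ∑ i ∈ range ℓ, (π i).2.1 := by
    rw [← sum_range_sub (fun i => ψ (π i).1)]
    exact sum_le_sum fun i _ => hchain i ▸ hψ _ (hmem i)
  linarith [hA ⟨(π 0).1, rfl⟩, hB ⟨(π ℓ).1, rfl⟩]

def cycleE (n : ℕ) (l : List ℤ) : Set (ZMod n × ℤ × ZMod n) :=
  Set.range fun t : ZMod n => (t, l.getD t.val 0, t + 1)

theorem satMP_cycleE {n : ℕ} [NeZero n] {l : List ℤ} (hl : l.length = n) (hsum : 0 ≤ l.sum) :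
    SatMP (cycleE n l) := by
  refine satMP_of_potential (fun t => (l.take t.val).sum) ?_
    ((Set.finite_range _).image _).bddAbove
  rintro _ ⟨t, rfl⟩
  have ht : t.val < l.length := hl ▸ t.val_lt
  have hwrap : (l.take (t + 1).val).sum ≤ (l.take (t.val + 1)).sum := by
    rw [ZMod.val_add, ZMod.val_one_eq_one_mod, Nat.add_mod_mod]
    rcases Nat.lt_or_ge (t.val + 1) n with hlt | hge
    · rw [Nat.mod_eq_of_lt hlt]
    · rw [show t.val + 1 = n by omega, Nat.mod_self, ← hl, List.take_length]
      simpa using hsum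
  simp only [List.sum_take_succ _ _ ht, List.getD_eq_getElem _ _ ht] at hwrap ⊢
  linarith

theorem hasWalk_cycleE_append {n : ℕ} [NeZero n] (l₁ s l₂ : List ℤ)
    (hn : (l₁ ++ s ++ l₂).length = n) :
    HasWalk (cycleE n (l₁ ++ s ++ l₂)) (l₁.length : ZMod n) s.sum
      ((l₁.length + s.length : ℕ) : ZMod n) := by
  induction s generalizing l₁ with
  | nil => simpa using HasWalk.refl _
  | cons x s ih =>
    have hlt : l₁.length < n := by simp at hn; omega
    have hedge : ((l₁.length : ZMod n), x, (l₁.length : ZMod n) + 1) ∈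
        cycleE n (l₁ ++ x :: s ++ l₂) :=
      ⟨l₁.length, by simp [ZMod.val_natCast, Nat.mod_eq_of_lt hlt]⟩
    rw [List.sum_cons]
    refine HasWalk.cons hedge ?_
    convert ih (l₁ ++ [x]) (by simpa using hn) using 2 <;> simp [add_comm, add_left_comm]

def joinSegments (S : ℕ → List ℤ) (m : ℕ) : List ℤ := (List.range m).flatMap S

@[simp]
theorem joinSegments_zero (S : ℕ → List ℤ) : joinSegments S 0 = [] := rfl

theorem joinSegments_succ (S : ℕ → List ℤ) (m : ℕ) :
    joinSegments S (m + 1) = joinSegments S m ++ S m := by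
  simp [joinSegments, List.range_succ]

theorem sum_joinSegments (S : ℕ → List ℤ) (m : ℕ) :
    (joinSegments S m).sum = ∑ i ∈ range m, (S i).sum := by
  induction m with
  | zero => simp
  | succ m ih => rw [joinSegments_succ, List.sum_append, ih, sum_range_succ]

theorem length_joinSegments (S : ℕ → List ℤ) (m : ℕ) :
    (joinSegments S m).length = ∑ i ∈ range m, (S i).length := by
  induction m with
  | zero => rfl
  | succ m ih => rw [joinSegments_succ, List.length_append, ih, sum_range_succ]

theorem joinSegments_prefix (S : ℕ → List ℤ) {j m : ℕ} (h : j ≤ m) :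
    joinSegments S j <+: joinSegments S m := by
  induction m, h using Nat.le_induction with
  | base => exact List.prefix_refl _
  | succ m _ ih => exact ih.trans (joinSegments_succ S m ▸ List.prefix_append _ _)

theorem hasWalk_cycleE_segment {n m i : ℕ} [NeZero n] (S : ℕ → List ℤ)
    (hn : (joinSegments S m).length = n) (hi : i < m) :
    HasWalk (cycleE n (joinSegments S m)) ((joinSegments S i).length : ZMod n) (S i).sum
      ((joinSegments S (i + 1)).length : ZMod n) := by
  obtain ⟨rest, hrest⟩ := joinSegments_prefix S hi
  rw [joinSegments_succ] at hrest
  rw [← hrest] at hn ⊢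
  simpa [joinSegments_succ] using hasWalk_cycleE_append _ _ _ hn

theorem eq_of_sum_min_nonneg {ι : Type*} {s : Finset ι} {x y : ι → ℤ}
    (hx : ∑ i ∈ s, x i = 0) (hy : ∑ i ∈ s, y i = 0) (h : 0 ≤ ∑ i ∈ s, min (x i) (y i)) :
    ∀ i ∈ s, x i = y i := by
  have hmin (f : ι → ℤ) (hf : ∑ i ∈ s, f i = 0) (hle : ∀ i, min (x i) (y i) ≤ f i) :
      ∀ i ∈ s, min (x i) (y i) = f i :=
    (sum_eq_sum_iff_of_le fun i _ => hle i).1 (le_antisymm (sum_le_sum fun i _ => hle i) (hf ▸ h))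
  intro i hi
  rw [← hmin x hx (fun i => min_le_left _ _) i hi, hmin y hy (fun i => min_le_right _ _) i hi]

theorem sum_segment_eq_of_marks_eq {U : Type} {EU : Set (U × ℤ × U)} (hU : SatMP EU)
    {n m : ℕ} [NeZero n] {S S' : ℕ → List ℤ}
    (hS : (joinSegments S m).length = n) (hS' : (joinSegments S' m).length = n)
    (h0 : (joinSegments S m).sum = 0) (h0' : (joinSegments S' m).sum = 0)
    {φ φ' : ZMod n → U} (hφ : IsHom (cycleE n (joinSegments S m)) EU φ)
    (hφ' : IsHom (cycleE n (joinSegments S' m)) EU φ')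
    (hmark : ∀ i < m, φ (joinSegments S i).length = φ' (joinSegments S' i).length) :
    ∀ i < m, (S i).sum = (S' i).sum := by
  intro i hi
  set z : ℕ → U := fun j => φ (joinSegments S j).length
  have hmark' : ∀ j ≤ m, z j = φ' (joinSegments S' j).length := fun j hj => by
    rcases hj.lt_or_eq with hj | rfl
    · exact hmark j hj
    · simpa [z, hS, hS'] using hmark 0 (by omega)
  have hwalk : ∀ j < m, HasWalk EU (z j) (S j).sum (z (j + 1)) := fun j hj =>
    (hasWalk_cycleE_segment S hS hj).map hφ
  have hwalk' : ∀ j < m, HasWalk EU (z j) (S' j).sum (z (j + 1)) := fun j hj => by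
    rw [hmark' j hj.le, hmark' (j + 1) hj]
    exact (hasWalk_cycleE_segment S' hS' hj).map hφ'
  have hmin : HasWalk EU (z 0) (∑ j ∈ range m, min (S j).sum (S' j).sum) (z m) :=
    HasWalk.sum_range fun j hj => by
      rcases min_cases (S j).sum (S' j).sum with ⟨h, _⟩ | ⟨h, _⟩ <;> rw [h]
      exacts [hwalk j hj, hwalk' j hj]
  have hclosed : z m = z 0 := by simp [z, hS]
  exact eq_of_sum_min_nonneg (by rwa [← sum_joinSegments]) (by rwa [← sum_joinSegments])
    (hU.hasWalk_nonneg (hclosed ▸ hmin)) i (mem_range.2 hi)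

def cycleWGraph {W : Finset ℤ} (n : ℕ) [NeZero n] (l : List ℤ) (hl : l.length = n)
    (hW : ∀ x ∈ l, x ∈ W) : WGraph W where
  V := ZMod n
  fin := inferInstance
  E := cycleE n l
  init := 0
  wt := by
    rintro _ ⟨t, rfl⟩
    have ht : t.val < l.length := hl ▸ t.val_lt
    show l.getD t.val 0 ∈ W
    rw [List.getD_eq_getElem _ _ ht]
    exact hW _ (List.getElem_mem ht)
  reach v := by
    have h := hasWalk_cycleE_append (n := n) [] (l.take v.val) (l.drop v.val) (by simpa using hl)
    simp only [List.nil_append, List.take_append_drop, List.length_nil, Nat.cast_zero, zero_add,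
      List.length_take, hl, min_eq_left v.val_lt.le, ZMod.natCast_zmod_val] at h
    exact h.exists_finPath

def digitList (n : ℕ) {K : ℕ} (r : Fin K → ℕ) : List ℤ :=
  (List.ofFn fun j : Fin K => List.replicate (r j) ((n : ℤ) ^ (j : ℕ))).flatten

theorem sum_digitList (n : ℕ) {K : ℕ} (r : Fin K → ℕ) :
    (digitList n r).sum = ∑ j, (r j : ℤ) * (n : ℤ) ^ (j : ℕ) := by
  simp [digitList, List.sum_flatten, List.sum_ofFn]

theorem length_digitList (n : ℕ) {K : ℕ} (r : Fin K → ℕ) :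
    (digitList n r).length = ∑ j, r j := by
  simp [digitList, List.sum_ofFn]

theorem mem_digitList {n K : ℕ} {r : Fin K → ℕ} {x : ℤ} (hx : x ∈ digitList n r) :
    ∃ j < K, x = (n : ℤ) ^ j := by
  simp only [digitList, List.mem_flatten, List.mem_ofFn] at hx
  obtain ⟨_, ⟨j, rfl⟩, hx⟩ := hx
  exact ⟨j, j.isLt, List.eq_of_mem_replicate hx⟩

theorem digitSum_injective {n d K : ℕ} (hd : d < n) :
    Function.Injective fun r : Fin K → Fin (d + 1) => ∑ j, ((r j : ℕ) : ℤ) * (n : ℤ) ^ (j : ℕ) := by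
  have hval (r : Fin K → Fin (d + 1)) : ((finFunctionFinEquiv (Fin.castLE hd ∘ r) : ℕ) : ℤ) =
      ∑ j, ((r j : ℕ) : ℤ) * (n : ℤ) ^ (j : ℕ) := by
    simp
  intro r r' h
  have := finFunctionFinEquiv.injective <| Fin.ext <| by
    exact_mod_cast (hval r).trans (h.trans (hval r').symm)
  funext j
  exact Fin.castLE_injective hd (congrFun this j)

def matrixSegment (n q : ℕ) {K : ℕ} (a : Fin K → Fin K → ℕ) (i : ℕ) : List ℤ :=
  if h : i < K then digitList n (a ⟨i, h⟩)
  else (-(q : ℤ) * ∑ j ∈ range K, (n : ℤ) ^ j) :: digitList n fun j => q - ∑ i, a i j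

section MatrixSegment

variable (n q : ℕ) {K : ℕ} (a : Fin K → Fin K → ℕ)

theorem sum_range_matrixSegment {M : Type*} [AddCommMonoid M] (f : List ℤ → M) :
    ∑ i ∈ range K, f (matrixSegment n q a i) = ∑ i, f (digitList n (a i)) := by
  rw [← Fin.sum_univ_eq_sum_range]
  simp [matrixSegment]

theorem matrixSegment_self :
    matrixSegment n q a K =
      (-(q : ℤ) * ∑ j ∈ range K, (n : ℤ) ^ j) :: digitList n fun j => q - ∑ i, a i j := by
  simp [matrixSegment]

theorem mem_joinSegments_matrixSegment {m : ℕ} {x : ℤ}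
    (hx : x ∈ joinSegments (matrixSegment n q a) m) :
    (∃ j < K, x = (n : ℤ) ^ j) ∨ x = -(q : ℤ) * ∑ j ∈ range K, (n : ℤ) ^ j := by
  obtain ⟨i, -, hx⟩ := List.mem_flatMap.1 hx
  unfold matrixSegment at hx
  split_ifs at hx
  · exact .inl (mem_digitList hx)
  · rcases List.mem_cons.1 hx with hx | hx
    exacts [.inr hx, .inl (mem_digitList hx)]

variable {a}

theorem length_joinSegments_matrixSegment (hcol : ∀ j, ∑ i, a i j ≤ q) :
    (joinSegments (matrixSegment n q a) (K + 1)).length = q * K + 1 := by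
  rw [length_joinSegments, sum_range_succ, sum_range_matrixSegment, matrixSegment_self]
  simp only [length_digitList, List.length_cons]
  rw [sum_comm, ← add_assoc, ← sum_add_distrib,
    sum_congr rfl fun j _ => Nat.add_sub_cancel' (hcol j)]
  simp [mul_comm]

theorem sum_joinSegments_matrixSegment (hcol : ∀ j, ∑ i, a i j ≤ q) :
    (joinSegments (matrixSegment n q a) (K + 1)).sum = 0 := by
  rw [sum_joinSegments, sum_range_succ, sum_range_matrixSegment, matrixSegment_self]
  simp only [sum_digitList, List.sum_cons, Nat.cast_sub (hcol _)]
  rw [sum_comm, ← Fin.sum_univ_eq_sum_range (fun j => (n : ℤ) ^ j), mul_sum, ← add_assoc,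
    ← sum_add_distrib, ← sum_add_distrib]
  refine sum_eq_zero fun j _ => ?_
  rw [← sum_mul]
  push_cast
  ring

end MatrixSegment

theorem pow_le_card_pow_of_universal {n K q d : ℕ} (hK : 0 < K) (hn : n = q * K + 1)
    (hd : K * d ≤ q) {W : Finset ℤ} (hpow : ∀ j < K, (n : ℤ) ^ j ∈ W)
    (hneg : -(q : ℤ) * ∑ j ∈ range K, (n : ℤ) ^ j ∈ W)
    {U : Type} [Fintype U] {EU : Set (U × ℤ × U)} (hU : Universal n W EU) :
    (d + 1) ^ (K * K) ≤ Fintype.card U ^ (K + 1) := by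
  have : NeZero n := ⟨by omega⟩
  have hdn : d < n := by nlinarith
  let S (a : Fin K → Fin K → Fin (d + 1)) := matrixSegment n q fun i j => (a i j : ℕ)
  have hcol (a : Fin K → Fin K → Fin (d + 1)) (j : Fin K) : ∑ i, (a i j : ℕ) ≤ q :=
    (sum_le_card_nsmul _ _ d fun i _ => Fin.is_le _).trans (by simpa using hd)
  have hlen a : (joinSegments (S a) (K + 1)).length = n :=
    hn ▸ length_joinSegments_matrixSegment n q (hcol a)
  have hsum a : (joinSegments (S a) (K + 1)).sum = 0 := sum_joinSegments_matrixSegment n q (hcol a)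
  have hW a : ∀ x ∈ joinSegments (S a) (K + 1), x ∈ W := fun x hx => by
    rcases mem_joinSegments_matrixSegment n q _ hx with ⟨j, hj, rfl⟩ | rfl
    exacts [hpow j hj, hneg]
  have hhom a : ∃ φ : ZMod n → U, IsHom (cycleE n (joinSegments (S a) (K + 1))) EU φ :=
    hU.2 (cycleWGraph n _ (hlen a) (hW a)) (ZMod.card n).le
      (satMP_cycleE (hlen a) (hsum a).ge)
  choose φ hφ using hhom
  let marks a : Fin (K + 1) → U := fun i => φ a (joinSegments (S a) i).length
  have hinj : Function.Injective marks := fun a b hab => by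
    have hseg := sum_segment_eq_of_marks_eq hU.1 (hlen a) (hlen b) (hsum a) (hsum b) (hφ a) (hφ b)
      fun i hi => congrFun hab ⟨i, hi⟩
    funext i
    refine digitSum_injective hdn ?_
    simpa [S, matrixSegment, sum_digitList] using hseg i (by omega)
  simpa [Fintype.card_fun, pow_mul] using Fintype.card_le_of_injective marks hinj

theorem card_image_pow_union_singleton {n : ℕ} (hn : 2 ≤ n) (K : ℕ) {x : ℤ} (hx : x ≤ 0) :
    ((range K).image (fun j => (n : ℤ) ^ j) ∪ {x}).card = K + 1 := by
  have hinj : Function.Injective fun j => (n : ℤ) ^ j :=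
    (pow_right_strictMono₀ (by exact_mod_cast hn : (1 : ℤ) < n)).injective
  rw [union_singleton, card_insert_of_notMem, card_image_of_injective _ hinj, card_range]
  simp only [mem_image, not_exists, not_and]
  intro j _ hj
  have : (0 : ℤ) < (n : ℤ) ^ j := by positivity
  omega

theorem rpow_div_le_of_pow_le {B X : ℝ} {N k : ℕ} (hB : 0 ≤ B) (hX : 0 ≤ X) (hk : 0 < k)
    (h : B ^ N ≤ X ^ k) : B ^ ((N : ℝ) / k) ≤ X := by
  rwa [div_eq_mul_inv, Real.rpow_mul hB, Real.rpow_natCast,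
    Real.rpow_inv_le_iff_of_pos (by positivity) hX (by positivity), Real.rpow_natCast]

/-- let `k, n ≥ 2` with `k - 1` dividing `n - 1`, let
`T = 1 + n + n² + ⋯ + n^(k-2)` and `W = {1, n, n², …, n^(k-2)} ∪ {-((n-1)/(k-1))·T}`,
a set of `k` integers. Then every `(n,W)`-universal graph `U` satisfies (as real
numbers) `|U|^k ≥ ((n-1)/(k-1)²)^((k-1)²)`; equivalently,
`|U| ≥ ((n-1)/(k-1)²)^((k-1)²/k)`. -/
theorem universal_lower_bound_number_of_weights (k n : ℕ) (hk : 2 ≤ k) (hn : 2 ≤ n)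
    (hdvd : k - 1 ∣ n - 1)
    (T : ℤ) (hT : T = ∑ j ∈ Finset.range (k - 1), (n : ℤ) ^ j)
    (W : Finset ℤ)
    (hW : W = (Finset.range (k - 1)).image (fun j => (n : ℤ) ^ j) ∪
      {-(((n - 1) / (k - 1) : ℕ) : ℤ) * T}) :
    W.card = k ∧
    ∀ (U : Type) (fU : Fintype U) (EU : Set (U × ℤ × U)), Universal n W EU →
      ((((n : ℝ) - 1) / ((k : ℝ) - 1) ^ 2) ^ ((k - 1) ^ 2) ≤
        (@Fintype.card U fU : ℝ) ^ k ∧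
      (((n : ℝ) - 1) / ((k : ℝ) - 1) ^ 2) ^ ((((k - 1) ^ 2 : ℕ) : ℝ) / (k : ℝ)) ≤
        (@Fintype.card U fU : ℝ)) := by
  obtain ⟨K, rfl⟩ : ∃ K, k = K + 1 := ⟨k - 1, by omega⟩
  simp only [Nat.add_sub_cancel] at hdvd hT hW ⊢
  subst hT hW
  set q := (n - 1) / K
  have hK : 0 < K := by omega
  have hnq : n = q * K + 1 := by rw [Nat.div_mul_cancel hdvd]; omega
  have hneg : -(q : ℤ) * ∑ j ∈ range K, (n : ℤ) ^ j ≤ 0 :=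
    mul_nonpos_of_nonpos_of_nonneg (neg_nonpos.2 q.cast_nonneg) (sum_nonneg fun j _ => by positivity)
  refine ⟨card_image_pow_union_singleton hn K hneg, fun U fU EU hU => ?_⟩
  have hcard := pow_le_card_pow_of_universal hK hnq (Nat.mul_div_le q K)
    (fun j hj => mem_union_left _ (mem_image_of_mem _ (mem_range.2 hj)))
    (mem_union_right _ (mem_singleton_self _)) hU
  have hbase : ((n : ℝ) - 1) / (((K + 1 : ℕ) : ℝ) - 1) ^ 2 = q / K := by
    have : (K : ℝ) ≠ 0 := by positivity
    rw [hnq]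
    push_cast
    rw [add_sub_cancel_right, add_sub_cancel_right]
    field_simp
  have hround : (q : ℝ) / K ≤ (q / K + 1 : ℕ) := by
    simpa [Nat.floor_div_eq_div] using (Nat.lt_floor_add_one ((q : ℝ) / K)).le
  have hpow : ((q : ℝ) / K) ^ (K ^ 2) ≤ (Fintype.card U : ℝ) ^ (K + 1) :=
    calc ((q : ℝ) / K) ^ (K ^ 2) ≤ ((q / K + 1 : ℕ) : ℝ) ^ (K * K) := by rw [sq]; gcongr
      _ ≤ _ := by exact_mod_cast hcard
  rw [hbase]
  exact ⟨hpow, rpow_div_le_of_pow_le (by positivity) (by positivity) (by omega) hpow⟩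
end
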